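/- For all n ≥ 1 and all k ≥ 1, the number of permutations π ∈ SP_n(132) with exactly k−1 descents equals the Stirling number of the second kind S(n,k), i.e., the number of set partitions of [n] into exactly k blocks. -/

import Mathlib

open scoped Classical

/-- The word `π(1)π(2)⋯π(n)` of a permutation of `[n]`, with values in `{1,…,n}`. -/
def permWord {n : ℕ} (π : Equiv.Perm (Fin n)) : List ℕ :=
  List.ofFn fun i => (π i : ℕ) + 1

/-- The restriction of a word to `[k]`: the subword of entries `≤ k`. -/
def restrict (w : List ℕ) (k : ℕ) : List ℕ := w.filter (fun x => x ≤ k)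

/-- A succession of a word: an index `i` with `w(i+1) = w(i) + 1`. -/
def hasSuccession (w : List ℕ) : Prop :=
  ∃ i, i + 1 < w.length ∧ w.getD (i + 1) 0 = w.getD i 0 + 1

/-- The number of descents of a word. -/
def desList (w : List ℕ) : ℕ :=
  (List.range (w.length - 1)).countP fun i =>
    decide (w.getD (i + 1) 0 < w.getD i 0)

/-- A word contains the pattern `τ` consecutively: some window of `τ.length` adjacent
entries is order-isomorphic to `τ`. -/
def containsPattern (τ w : List ℕ) : Prop :=
  ∃ i, i + τ.length ≤ w.length ∧ ∀ a < τ.length, ∀ b < τ.length,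
    (τ.getD a 0 < τ.getD b 0 ↔ w.getD (i + a) 0 < w.getD (i + b) 0)

/-- `SP_n(τ)`: permutations all of whose restrictions to `[k]` avoid the consecutive
pattern `τ`. -/
def AvoidsSP {n : ℕ} (τ : List ℕ) (π : Equiv.Perm (Fin n)) : Prop :=
  ∀ k, ¬ containsPattern τ (restrict (permWord π) k)

/-!
A permutation avoids the simsun pattern 132 exactly when every descent bottom is smaller than
all entries before it. Indeed, two adjacent entries `c > b` of a restriction come from a descent
of the full word with bottom `b`, so a consecutive `a c b` with `a < b < c` in a restriction
contradicts this property. Conversely, by induction the tail of the word has the property, so if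
the first entry `x` is smaller than a later descent bottom `b`, all entries strictly between them
exceed `b`, and restricting to the least of these produces a consecutive `x c b`, a 132.

In such a word the running minimum drops exactly at the descents, so the word is the
concatenation of its ascending runs, each beginning with its minimum, in decreasing order of
these minima. Reading off the blocks as the fibres of the running minimum, and conversely
listing the blocks of a partition by decreasing minimum, each increasingly, is a bijection with
set partitions, under which `k` blocks correspond to `k - 1` descents.
-/

namespace SimsunStirling

def DescentBottomsAreLRMins (w : List ℕ) : Prop :=
  ∀ i j, i ≤ j → j + 1 < w.length → w.getD (j + 1) 0 < w.getD j 0 →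
    w.getD (j + 1) 0 < w.getD i 0

namespace DescentBottomsAreLRMins

variable {x : ℕ} {t : List ℕ}

lemma tail (h : DescentBottomsAreLRMins (x :: t)) : DescentBottomsAreLRMins t :=
  fun i j hij hj hd => h (i + 1) (j + 1) (by omega) (by simpa using hj) hd

lemma cons (ht : DescentBottomsAreLRMins t)
    (hx : ∀ j < t.length, (x :: t).getD (j + 1) 0 < (x :: t).getD j 0 → t.getD j 0 < x) :
    DescentBottomsAreLRMins (x :: t) := by
  rintro (_ | i) j hij hj hd
  · exact hx j (by simpa using hj) hd
  · obtain ⟨j, rfl⟩ : ∃ j', j = j' + 1 := ⟨j - 1, by omega⟩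
    exact ht i j (by omega) (by simpa using hj) hd

end DescentBottomsAreLRMins

lemma restrict_cons (x : ℕ) (w : List ℕ) (k : ℕ) :
    restrict (x :: w) k = if x ≤ k then x :: restrict w k else restrict w k := by
  simp [restrict, List.filter_cons]

lemma containsPattern_cons {τ u : List ℕ} (x : ℕ) (h : containsPattern τ u) :
    containsPattern τ (x :: u) := by
  obtain ⟨i, hlen, hiso⟩ := h
  refine ⟨i + 1, by simp only [List.length_cons]; omega, fun a ha b hb => ?_⟩
  simpa [Nat.add_right_comm i 1] using hiso a ha b hb

lemma containsPattern_restrict_cons {τ w : List ℕ} {x k : ℕ}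
    (h : containsPattern τ (restrict w k)) : containsPattern τ (restrict (x :: w) k) := by
  rw [restrict_cons]
  split
  · exact containsPattern_cons x h
  · exact h

lemma exists_descent_of_restrict_eq {t rest : List ℕ} {k c b : ℕ}
    (h : restrict t k = c :: b :: rest) (hbc : b < c) :
    ∃ j, j + 1 < t.length ∧ t.getD (j + 1) 0 = b ∧ b < t.getD j 0 := by
  obtain ⟨l₁, l₂, rfl, -, -, h₂⟩ := List.filter_eq_cons_iff.mp h
  obtain ⟨m₁, m₂, rfl, hm₁, hbk, -⟩ := List.filter_eq_cons_iff.mp h₂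
  have hsplit : l₁ ++ c :: (m₁ ++ b :: m₂) = (l₁ ++ c :: m₁) ++ b :: m₂ := by simp
  have hne : l₁ ++ c :: m₁ ≠ [] := by simp
  have hlen : 0 < (l₁ ++ c :: m₁).length := by simp
  refine ⟨(l₁ ++ c :: m₁).length - 1, by simp; omega, ?_, ?_⟩
  -- the entry just before `b` is `c` or a removed entry, which exceeds `k ≥ b`
  · rw [hsplit, Nat.sub_add_cancel hlen, List.getD_append_right _ _ _ _ le_rfl]
    simp
  · rw [hsplit, List.getD_append _ _ _ _ (by omega), List.getD_eq_getElem _ _ (by omega),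
      List.getElem_length_sub_one_eq_getLast, List.getLast_append_of_ne_nil _ (by simp)]
    have hmem := List.getLast_mem (l := c :: m₁) (by simp)
    rcases List.mem_cons.mp hmem with h | h
    · rw [h]; exact hbc
    · have := hm₁ _ h
      simp only [decide_eq_true_eq] at this hbk
      omega

theorem not_containsPattern_restrict_of_descentBottomsAreLRMins :
    ∀ {w : List ℕ}, DescentBottomsAreLRMins w → ∀ k, ¬ containsPattern [1, 3, 2] (restrict w k)
  | [], _, k, ⟨i, hlen, _⟩ => by simp [restrict] at hlen
  | x :: t, hw, k, hpat => by
    have ih := not_containsPattern_restrict_of_descentBottomsAreLRMins hw.tail k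
    rw [restrict_cons] at hpat
    split at hpat
    · obtain ⟨_ | i, hlen, hiso⟩ := hpat
      · rcases hu : restrict t k with _ | ⟨c, _ | ⟨b, rest⟩⟩
        all_goals rw [hu] at hlen hiso
        · simp at hlen
        · simp at hlen
        have hxb : x < b := by simpa using (hiso 0 (by simp) 2 (by simp)).mp (by simp)
        have hbc : b < c := by simpa using (hiso 2 (by simp) 1 (by simp)).mp (by simp)
        obtain ⟨j, hj, hjb, hbj⟩ := exists_descent_of_restrict_eq hu hbc
        have := hw 0 (j + 1) (by omega) (by simpa using hj)
          (by simp only [List.getD_cons_succ]; omega)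
        simp only [List.getD_cons_succ, List.getD_cons_zero] at this
        omega
      · exact ih ⟨i, by simp at hlen; omega, fun a ha b hb => by
          simpa [Nat.add_right_comm i 1] using hiso a ha b hb⟩
    · exact ih hpat

lemma restrict_min_eq_singleton {M : List ℕ} (hnd : M.Nodup) (hne : M ≠ []) :
    restrict M (M.min hne) = [M.min hne] := by
  have hall : ∀ y ∈ restrict M (M.min hne), y = M.min hne := fun y hy => by
    obtain ⟨hyM, hyle⟩ := List.mem_filter.mp hy
    exact le_antisymm (by simpa using hyle) (List.min_le_of_mem hyM)
  have hmem : M.min hne ∈ restrict M (M.min hne) :=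
    List.mem_filter.mpr ⟨List.min_mem hne, by simp⟩
  have hrep := List.eq_replicate_of_mem hall
  have hnd' : (restrict M (M.min hne)).Nodup := hnd.filter _
  rw [hrep, List.nodup_replicate] at hnd'
  have hpos : 0 < (restrict M (M.min hne)).length := List.length_pos_of_mem hmem
  rw [hrep, show (restrict M (M.min hne)).length = 1 by omega, List.replicate_one]

lemma containsPattern_restrict_of_lt {x b : ℕ} {M rest : List ℕ} (hnd : M.Nodup) (hne : M ≠ [])
    (hxb : x < b) (hM : ∀ y ∈ M, b < y) :
    containsPattern [1, 3, 2] (restrict (x :: (M ++ b :: rest)) (M.min hne)) := by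
  have hbc : b < M.min hne := hM _ (List.min_mem hne)
  have hword : restrict (x :: (M ++ b :: rest)) (M.min hne) =
      x :: M.min hne :: b :: restrict rest (M.min hne) := by
    have hmin := restrict_min_eq_singleton hnd hne
    rw [restrict_cons, if_pos (by omega)]
    simp only [restrict, List.filter_append] at hmin ⊢
    rw [hmin]
    simp [hbc.le]
  refine ⟨0, by simp [hword], fun a ha b' hb' => ?_⟩
  rw [hword]
  simp only [List.length_cons, List.length_nil] at ha hb'
  interval_cases a <;> interval_cases b' <;> simp <;> omega

theorem descentBottomsAreLRMins_of_forall_not_containsPattern :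
    ∀ {w : List ℕ}, w.Nodup → (∀ k, ¬ containsPattern [1, 3, 2] (restrict w k)) →
      DescentBottomsAreLRMins w
  | [], _, _ => fun _ _ _ hj => by simp at hj
  | x :: t, hnd, havoid => by
    have ht : DescentBottomsAreLRMins t :=
      descentBottomsAreLRMins_of_forall_not_containsPattern hnd.of_cons
        fun k h => havoid k (containsPattern_restrict_cons h)
    refine ht.cons fun j hj hdesc => ?_
    by_contra hbx
    have hxt : x ≠ t.getD j 0 := fun hx => (List.nodup_cons.mp hnd).1 (by
      rw [hx, List.getD_eq_getElem _ _ hj]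
      exact List.getElem_mem hj)
    have hxb : x < t.getD j 0 := by omega
    obtain _ | j := j
    · simp only [List.getD_cons_zero, List.getD_cons_succ] at hdesc
      omega
    have hM : ∀ y ∈ t.take (j + 1), t.getD (j + 1) 0 < y := by
      intro y hy
      obtain ⟨s, hs, rfl⟩ := List.mem_iff_getElem.mp hy
      simp only [List.length_take] at hs
      rw [List.getElem_take, ← List.getD_eq_getElem _ 0]
      exact ht s j (by omega) hj (by simpa using hdesc)
    have hsplit : t = t.take (j + 1) ++ t.getD (j + 1) 0 :: t.drop (j + 2) := by
      rw [List.getD_eq_getElem _ _ hj, ← List.drop_eq_getElem_cons hj, List.take_append_drop]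
    have hne : t.take (j + 1) ≠ [] := List.ne_nil_of_length_pos (by simp; omega)
    have hpat := containsPattern_restrict_of_lt (rest := t.drop (j + 2))
      (hnd.of_cons.sublist (List.take_sublist _ _)) hne hxb hM
    rw [← hsplit] at hpat
    exact havoid _ hpat

def runMin (w : List ℕ) : ℕ → ℕ
  | 0 => w.getD 0 0
  | i + 1 => min (runMin w i) (w.getD (i + 1) 0)

lemma runMin_le_getD (w : List ℕ) {i t : ℕ} (ht : t ≤ i) : runMin w i ≤ w.getD t 0 := by
  induction i with
  | zero => rw [Nat.le_zero.mp ht]; rfl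
  | succ i ih =>
    rcases Nat.eq_or_lt_of_le ht with rfl | ht
    · exact min_le_right _ _
    · exact (min_le_left _ _).trans (ih (by omega))

lemma exists_runMin_eq_getD (w : List ℕ) (i : ℕ) : ∃ t ≤ i, runMin w i = w.getD t 0 := by
  induction i with
  | zero => exact ⟨0, le_rfl, rfl⟩
  | succ i ih =>
    obtain ⟨t, ht, hv⟩ := ih
    rcases le_total (runMin w i) (w.getD (i + 1) 0) with h | h
    · exact ⟨t, by omega, by rw [runMin, min_eq_left h, hv]⟩
    · exact ⟨i + 1, le_rfl, by rw [runMin, min_eq_right h]⟩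

lemma runMin_antitone (w : List ℕ) : Antitone (runMin w) :=
  antitone_nat_of_succ_le fun _ => min_le_left _ _

section runMin

variable {w : List ℕ}

lemma runMin_succ_of_lt (hC : DescentBottomsAreLRMins w) {i : ℕ} (hi : i + 1 < w.length)
    (hd : w.getD (i + 1) 0 < w.getD i 0) :
    runMin w (i + 1) = w.getD (i + 1) 0 ∧ w.getD (i + 1) 0 < runMin w i := by
  obtain ⟨t, ht, hv⟩ := exists_runMin_eq_getD w i
  have := hC t i ht hi hd
  exact ⟨min_eq_right (by omega), by omega⟩

lemma runMin_succ_of_gt {i : ℕ} (hd : w.getD i 0 < w.getD (i + 1) 0) :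
    runMin w (i + 1) = runMin w i :=
  min_eq_left ((runMin_le_getD w le_rfl).trans hd.le)

lemma getD_ne_getD (hnd : w.Nodup) {i j : ℕ} (hi : i < w.length) (hj : j < w.length)
    (hij : i ≠ j) : w.getD i 0 ≠ w.getD j 0 := by
  rw [List.getD_eq_getElem _ _ hi, List.getD_eq_getElem _ _ hj]
  exact fun h => hij (hnd.getElem_inj_iff.mp h)

lemma card_image_runMin (hC : DescentBottomsAreLRMins w) (hnd : w.Nodup) {i : ℕ}
    (hi : i < w.length) :
    ((Finset.range (i + 1)).image (runMin w)).card =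
      1 + (List.range i).countP (fun t => decide (w.getD (t + 1) 0 < w.getD t 0)) := by
  induction i with
  | zero => simp
  | succ i ih =>
    rw [Finset.range_add_one, Finset.image_insert, List.range_succ, List.countP_append,
      ← add_assoc, ← ih (by omega)]
    rcases lt_or_gt_of_ne (getD_ne_getD hnd hi (by omega : i < w.length) (by omega)) with hd | hd
    · obtain ⟨hv, hlt⟩ := runMin_succ_of_lt hC hi hd
      have hnotMem : runMin w (i + 1) ∉ (Finset.range (i + 1)).image (runMin w) := by
        simp only [Finset.mem_image, Finset.mem_range, not_exists, not_and]
        intro t ht heq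
        have := runMin_antitone w (show t ≤ i by omega)
        omega
      rw [Finset.card_insert_of_notMem hnotMem]
      simp only [List.countP_cons, List.countP_nil, decide_eq_true hd, if_true]
    · have hmem : runMin w (i + 1) ∈ (Finset.range (i + 1)).image (runMin w) :=
        Finset.mem_image.mpr ⟨i, by simp, (runMin_succ_of_gt hd).symm⟩
      rw [Finset.insert_eq_self.mpr hmem]
      simp only [List.countP_cons, List.countP_nil, decide_eq_false hd.not_gt,
        Bool.false_eq_true, if_false, add_zero]

end runMin

structure IsArrangement (s : Finset ℕ) (w : List ℕ) : Prop where
  nodup : w.Nodup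
  mem_iff : ∀ x, x ∈ w ↔ x ∈ s

namespace IsArrangement

variable {s : Finset ℕ} {w : List ℕ}

lemma length_eq (hw : IsArrangement s w) : w.length = s.card := by
  rw [← List.toFinset_card_of_nodup hw.nodup]
  congr 1
  ext x
  simp [hw.mem_iff]

lemma getD_mem (hw : IsArrangement s w) {i : ℕ} (hi : i < w.length) : w.getD i 0 ∈ s := by
  rw [List.getD_eq_getElem _ _ hi]
  exact (hw.mem_iff _).mp (List.getElem_mem hi)

lemma idxOf_lt (hw : IsArrangement s w) {x : ℕ} (hx : x ∈ s) : w.idxOf x < w.length :=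
  List.idxOf_lt_length_iff.mpr ((hw.mem_iff x).mpr hx)

lemma getD_idxOf (hw : IsArrangement s w) {x : ℕ} (hx : x ∈ s) : w.getD (w.idxOf x) 0 = x := by
  rw [List.getD_eq_getElem _ _ (hw.idxOf_lt hx)]
  exact List.getElem_idxOf _

lemma idxOf_getD (hw : IsArrangement s w) {i : ℕ} (hi : i < w.length) :
    w.idxOf (w.getD i 0) = i := by
  rw [List.getD_eq_getElem _ _ hi]
  exact hw.nodup.idxOf_getElem _ _

end IsArrangement

noncomputable def runMinAt (w : List ℕ) (x : ℕ) : ℕ := runMin w (w.idxOf x)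

noncomputable def runMinPartition (s : Finset ℕ) (w : List ℕ) : Finpartition s :=
  Finpartition.ofSetSetoid (Setoid.ker (runMinAt w)) s

section runMinPartition

variable {s : Finset ℕ} {w : List ℕ}

lemma mem_part_runMinPartition {x y : ℕ} :
    y ∈ (runMinPartition s w).part x ↔ x ∈ s ∧ y ∈ s ∧ runMinAt w x = runMinAt w y :=
  Finpartition.mem_part_ofSetSetoid_iff_rel s

lemma card_parts_runMinPartition (hw : IsArrangement s w) (hC : DescentBottomsAreLRMins w)
    (hs : s.Nonempty) : (runMinPartition s w).parts.card = 1 + desList w := by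
  have hlen : 0 < w.length := hw.length_eq ▸ hs.card_pos
  have himage : s.image (runMinAt w) = (Finset.range (w.length - 1 + 1)).image (runMin w) := by
    ext v
    simp only [Finset.mem_image, Finset.mem_range]
    constructor
    · rintro ⟨x, hx, rfl⟩
      exact ⟨w.idxOf x, by have := hw.idxOf_lt hx; omega, rfl⟩
    · rintro ⟨i, hi, rfl⟩
      exact ⟨w.getD i 0, hw.getD_mem (by omega), by rw [runMinAt, hw.idxOf_getD (by omega)]⟩
  have hparts : (runMinPartition s w).parts =
      (s.image (runMinAt w)).image (fun v => s.filter (fun y => v = runMinAt w y)) := by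
    rw [runMinPartition, Finpartition.ofSetSetoid_parts, Finset.image_image]
    ext t
    simp
  rw [hparts, Finset.card_image_of_injOn, himage,
    card_image_runMin hC hw.nodup (by omega), desList]
  intro v hv v' _ heq
  obtain ⟨x, hx, rfl⟩ := Finset.mem_image.mp hv
  have hxmem : x ∈ s.filter (fun y => runMinAt w x = runMinAt w y) := by simp [hx]
  simp only [heq, Finset.mem_filter] at hxmem
  exact hxmem.2.symm

end runMinPartition

noncomputable def blockMin {s : Finset ℕ} (p : Finpartition s) (x : ℕ) : ℕ :=
  if h : (p.part x).Nonempty then (p.part x).min' h else 0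

section blockMin

variable {s : Finset ℕ} {p : Finpartition s} {x y : ℕ}

lemma blockMin_eq_min' (hx : x ∈ s) :
    blockMin p x = (p.part x).min' (p.part_nonempty.mpr hx) :=
  dif_pos _

lemma blockMin_mem_part (hx : x ∈ s) : blockMin p x ∈ p.part x := by
  rw [blockMin_eq_min' hx]
  exact Finset.min'_mem _ _

lemma blockMin_mem (hx : x ∈ s) : blockMin p x ∈ s :=
  p.part_subset x (blockMin_mem_part hx)

lemma blockMin_le_self (hx : x ∈ s) : blockMin p x ≤ x := by
  rw [blockMin_eq_min' hx]
  exact Finset.min'_le _ _ (p.mem_part hx)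

lemma blockMin_eq_of_mem_part (hy : y ∈ p.part x) : blockMin p y = blockMin p x := by
  have hx : x ∈ s := p.part_nonempty.mp ⟨y, hy⟩
  rw [blockMin, blockMin, p.part_eq_of_mem (p.part_mem.mpr hx) hy]

lemma blockMin_blockMin (hx : x ∈ s) : blockMin p (blockMin p x) = blockMin p x :=
  blockMin_eq_of_mem_part (blockMin_mem_part hx)

lemma blockMin_eq_blockMin_iff (hx : x ∈ s) (hy : y ∈ s) :
    blockMin p x = blockMin p y ↔ y ∈ p.part x := by
  refine ⟨fun h => ?_, fun h => (blockMin_eq_of_mem_part h).symm⟩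
  have hxy : p.part x = p.part y := p.eq_of_mem_parts (p.part_mem.mpr hx) (p.part_mem.mpr hy)
    (blockMin_mem_part hx) (h ▸ blockMin_mem_part hy)
  exact hxy ▸ p.mem_part hy

end blockMin

def BlockLE {s : Finset ℕ} (p : Finpartition s) (x y : ℕ) : Prop :=
  blockMin p y < blockMin p x ∨ (blockMin p x = blockMin p y ∧ x ≤ y)

section BlockLE

variable {s : Finset ℕ} (p : Finpartition s)

noncomputable instance : DecidableRel (BlockLE p) := fun _ _ => by
  unfold BlockLE; infer_instance

instance : IsTrans ℕ (BlockLE p) := ⟨fun _ _ _ => by unfold BlockLE; omega⟩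

instance : Std.Antisymm (BlockLE p) := ⟨fun _ _ => by unfold BlockLE; omega⟩

instance : Std.Total (BlockLE p) := ⟨fun _ _ => by unfold BlockLE; omega⟩

noncomputable def blockWord : List ℕ := s.sort (BlockLE p)

lemma isArrangement_blockWord : IsArrangement s (blockWord p) :=
  ⟨Finset.sort_nodup _ _, fun _ => Finset.mem_sort _⟩

end BlockLE

lemma _root_.Finpartition.eq_of_forall_part_eq {α : Type*} [DecidableEq α] {s : Finset α}
    {P Q : Finpartition s} (h : ∀ x ∈ s, P.part x = Q.part x) : P = Q := by
  have key : ∀ {P Q : Finpartition s}, (∀ x ∈ s, P.part x = Q.part x) →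
      ∀ t ∈ P.parts, t ∈ Q.parts := by
    intro P Q h t ht
    obtain ⟨x, hx, rfl⟩ := P.part_surjOn ht
    exact h x hx ▸ Q.part_mem.mpr hx
  exact Finpartition.ext (Finset.ext fun t =>
    ⟨key h t, key (fun x hx => (h x hx).symm) t⟩)

section pairwise

variable {s : Finset ℕ} {p : Finpartition s} {w : List ℕ}

lemma blockLE_getD (hs : w.Pairwise (BlockLE p)) {i j : ℕ} (hij : i < j) (hj : j < w.length) :
    BlockLE p (w.getD i 0) (w.getD j 0) := by
  rw [List.getD_eq_getElem _ _ (hij.trans hj), List.getD_eq_getElem _ _ hj]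
  exact List.pairwise_iff_getElem.mp hs i j _ hj hij

lemma blockMin_getD_antitone (hs : w.Pairwise (BlockLE p)) {i j : ℕ} (hij : i ≤ j)
    (hj : j < w.length) : blockMin p (w.getD j 0) ≤ blockMin p (w.getD i 0) := by
  rcases hij.eq_or_lt with rfl | hij
  · rfl
  · have := blockLE_getD hs hij hj
    unfold BlockLE at this
    omega

lemma runMin_eq_blockMin (hw : IsArrangement s w) (hs : w.Pairwise (BlockLE p)) {i : ℕ}
    (hi : i < w.length) : runMin w i = blockMin p (w.getD i 0) := by
  have hx := hw.getD_mem hi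
  apply le_antisymm
  · have hm : blockMin p (w.getD i 0) ∈ s := blockMin_mem hx
    have hidx : w.idxOf (blockMin p (w.getD i 0)) ≤ i := by
      by_contra! h
      have hle := blockLE_getD hs h (hw.idxOf_lt hm)
      rw [hw.getD_idxOf hm, BlockLE, blockMin_blockMin hx] at hle
      have hxm : w.getD i 0 = blockMin p (w.getD i 0) := by
        have := blockMin_le_self (p := p) hx
        omega
      have := hw.idxOf_getD hi
      rw [hxm] at this
      omega
    exact (runMin_le_getD w hidx).trans_eq (hw.getD_idxOf hm)
  · obtain ⟨t, ht, hv⟩ := exists_runMin_eq_getD w i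
    rw [hv]
    exact (blockMin_getD_antitone hs ht hi).trans (blockMin_le_self (hw.getD_mem (by omega)))

lemma runMinAt_eq_blockMin (hw : IsArrangement s w) (hs : w.Pairwise (BlockLE p)) {x : ℕ}
    (hx : x ∈ s) : runMinAt w x = blockMin p x := by
  rw [runMinAt, runMin_eq_blockMin hw hs (hw.idxOf_lt hx), hw.getD_idxOf hx]

lemma descentBottomsAreLRMins_of_pairwise (hw : IsArrangement s w)
    (hs : w.Pairwise (BlockLE p)) : DescentBottomsAreLRMins w := by
  intro i j hij hj hd
  have hdrop : runMin w (j + 1) < runMin w j := by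
    have := blockLE_getD hs (show j < j + 1 by omega) hj
    unfold BlockLE at this
    rw [runMin_eq_blockMin hw hs hj, runMin_eq_blockMin hw hs (by omega)]
    omega
  have hstep : runMin w (j + 1) = min (runMin w j) (w.getD (j + 1) 0) := rfl
  have := runMin_antitone w hij
  have := runMin_le_getD w (le_refl i)
  omega

lemma runMinPartition_eq_of_pairwise (hw : IsArrangement s w) (hs : w.Pairwise (BlockLE p)) :
    runMinPartition s w = p := by
  refine Finpartition.eq_of_forall_part_eq fun x hx => Finset.ext fun y => ?_
  rw [mem_part_runMinPartition]
  constructor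
  · rintro ⟨-, hy, hxy⟩
    rwa [runMinAt_eq_blockMin hw hs hx, runMinAt_eq_blockMin hw hs hy,
      blockMin_eq_blockMin_iff hx hy] at hxy
  · intro hy
    have hys := p.part_subset x hy
    refine ⟨hx, hys, ?_⟩
    rwa [runMinAt_eq_blockMin hw hs hx, runMinAt_eq_blockMin hw hs hys,
      blockMin_eq_blockMin_iff hx hys]

end pairwise

section runMinPartition

variable {s : Finset ℕ} {w : List ℕ}

lemma getD_le_getD_of_runMin_eq (hC : DescentBottomsAreLRMins w) (hnd : w.Nodup) {i j : ℕ}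
    (hij : i ≤ j) (hj : j < w.length) (h : runMin w i = runMin w j) :
    w.getD i 0 ≤ w.getD j 0 := by
  induction j, hij using Nat.le_induction with
  | base => rfl
  | succ j hij ih =>
    rcases lt_or_gt_of_ne (getD_ne_getD hnd hj (by omega : j < w.length) (by omega)) with hd | hd
    · have := runMin_succ_of_lt hC hj hd
      have := runMin_antitone w hij
      omega
    · exact (ih (by omega) (h.trans (runMin_succ_of_gt hd))).trans hd.le

lemma blockMin_runMinPartition (hw : IsArrangement s w) {x : ℕ} (hx : x ∈ s) :
    blockMin (runMinPartition s w) x = runMinAt w x := by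
  rw [blockMin_eq_min' hx, Finset.min'_eq_iff]
  obtain ⟨t, ht, hv⟩ := exists_runMin_eq_getD w (w.idxOf x)
  have htl : t < w.length := by have := hw.idxOf_lt hx; omega
  refine ⟨mem_part_runMinPartition.mpr ⟨hx, ?_, ?_⟩, fun y hy => ?_⟩
  · rw [runMinAt, hv]
    exact hw.getD_mem htl
  · rw [runMinAt, runMinAt, hv, hw.idxOf_getD htl]
    exact le_antisymm (hv.symm.trans_le (runMin_antitone w ht)) (runMin_le_getD w le_rfl)
  · obtain ⟨-, hys, hxy⟩ := mem_part_runMinPartition.mp hy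
    rw [hxy]
    exact (runMin_le_getD w le_rfl).trans_eq (hw.getD_idxOf hys)

lemma pairwise_blockLE_runMinPartition (hw : IsArrangement s w)
    (hC : DescentBottomsAreLRMins w) : w.Pairwise (BlockLE (runMinPartition s w)) := by
  have hblock : ∀ k < w.length, blockMin (runMinPartition s w) (w.getD k 0) = runMin w k :=
    fun k hk => by rw [blockMin_runMinPartition hw (hw.getD_mem hk), runMinAt, hw.idxOf_getD hk]
  rw [List.pairwise_iff_getElem]
  intro i j hi hj hij
  rw [← List.getD_eq_getElem _ 0 hi, ← List.getD_eq_getElem _ 0 hj, BlockLE, hblock i hi,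
    hblock j hj]
  rcases (runMin_antitone w hij.le).lt_or_eq with h | h
  · exact Or.inl h
  · exact Or.inr ⟨h.symm, getD_le_getD_of_runMin_eq hC hw.nodup hij.le hj h.symm⟩

lemma blockWord_runMinPartition (hw : IsArrangement s w) (hC : DescentBottomsAreLRMins w) :
    blockWord (runMinPartition s w) = w :=
  List.Perm.eq_of_pairwise' (Finset.pairwise_sort _ _) (pairwise_blockLE_runMinPartition hw hC)
    (List.perm_of_nodup_nodup_toFinset_eq (Finset.sort_nodup _ _) hw.nodup
      (by ext; simp [blockWord, hw.mem_iff]))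

end runMinPartition

section permWord

variable {n : ℕ}

lemma isArrangement_permWord (π : Equiv.Perm (Fin n)) :
    IsArrangement (Finset.Icc 1 n) (permWord π) := by
  refine ⟨List.nodup_ofFn.mpr fun i j h => π.injective (Fin.ext (by simpa using h)), fun x => ?_⟩
  simp only [permWord, List.mem_ofFn, Finset.mem_Icc]
  constructor
  · rintro ⟨i, rfl⟩
    exact ⟨by omega, (π i).isLt⟩
  · rintro ⟨h1, h2⟩
    exact ⟨π.symm ⟨x - 1, by omega⟩, by simp; omega⟩

lemma permWord_injective : Function.Injective (permWord (n := n)) := fun π π' h =>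
  Equiv.ext fun i => Fin.ext (by simpa using congrFun (List.ofFn_inj.mp h) i)

lemma exists_permWord_eq {w : List ℕ} (hw : IsArrangement (Finset.Icc 1 n) w) :
    ∃ π : Equiv.Perm (Fin n), permWord π = w := by
  have hlen : w.length = n := by simpa using hw.length_eq
  have hmem : ∀ i : Fin n, w.getD i 0 ∈ Finset.Icc 1 n := fun i => hw.getD_mem (by omega)
  let f : Fin n → Fin n := fun i => ⟨w.getD i 0 - 1, by have := Finset.mem_Icc.mp (hmem i); omega⟩
  have hf : Function.Injective f := fun i j h => by
    by_contra hij
    have := getD_ne_getD hw.nodup (by omega : (i : ℕ) < w.length) (by omega : (j : ℕ) < w.length)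
      (Fin.val_ne_of_ne hij)
    have := hmem i
    have := hmem j
    simp only [f, Fin.mk.injEq, Finset.mem_Icc] at *
    omega
  refine ⟨Equiv.ofBijective f hf.bijective_of_finite,
    List.ext_getElem (by simp [permWord, hlen]) ?_⟩
  intro i h₁ h₂
  have := hmem ⟨i, by simpa [permWord] using h₁⟩
  simp only [permWord, List.getElem_ofFn, Equiv.ofBijective_apply, f, Finset.mem_Icc] at this ⊢
  rw [List.getD_eq_getElem _ _ h₂] at this ⊢
  omega

theorem avoidsSP_132_iff (π : Equiv.Perm (Fin n)) :
    AvoidsSP [1, 3, 2] π ↔ DescentBottomsAreLRMins (permWord π) :=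
  ⟨descentBottomsAreLRMins_of_forall_not_containsPattern (isArrangement_permWord π).nodup,
    not_containsPattern_restrict_of_descentBottomsAreLRMins⟩

lemma injOn_runMinPartition_permWord :
    Set.InjOn (fun π : Equiv.Perm (Fin n) => runMinPartition (Finset.Icc 1 n) (permWord π))
      {π | AvoidsSP [1, 3, 2] π} := by
  intro π hπ π' hπ' h
  apply permWord_injective
  rw [← blockWord_runMinPartition (isArrangement_permWord π) ((avoidsSP_132_iff π).mp hπ),
    ← blockWord_runMinPartition (isArrangement_permWord π') ((avoidsSP_132_iff π').mp hπ')]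
  exact congrArg blockWord h

lemma image_runMinPartition_permWord {k : ℕ} (hn : 1 ≤ n) (hk : 1 ≤ k) :
    (fun π : Equiv.Perm (Fin n) => runMinPartition (Finset.Icc 1 n) (permWord π)) ''
        {π | AvoidsSP [1, 3, 2] π ∧ desList (permWord π) = k - 1} =
      {p : Finpartition (Finset.Icc 1 n) | p.parts.card = k} := by
  have hne : (Finset.Icc 1 n).Nonempty := Finset.nonempty_Icc.mpr hn
  ext p
  constructor
  · rintro ⟨π, ⟨hπ, hdes⟩, rfl⟩
    show _ = k
    rw [card_parts_runMinPartition (isArrangement_permWord π) ((avoidsSP_132_iff π).mp hπ) hne,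
      hdes]
    omega
  · intro hp
    have hw := isArrangement_blockWord p
    have hs : (blockWord p).Pairwise (BlockLE p) := Finset.pairwise_sort _ _
    have hC := descentBottomsAreLRMins_of_pairwise hw hs
    have hpart := runMinPartition_eq_of_pairwise hw hs
    obtain ⟨π, hπ⟩ := exists_permWord_eq hw
    have hcard := card_parts_runMinPartition hw hC hne
    rw [hpart, show p.parts.card = k from hp] at hcard
    refine ⟨π, ⟨(avoidsSP_132_iff π).mpr (hπ ▸ hC), by rw [hπ]; omega⟩, ?_⟩
    simp only [hπ, hpart]

end permWord

end SimsunStirling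

/-- for `n ≥ 1` and `k ≥ 1`, the number of `π ∈ SP_n(132)` with
exactly `k-1` descents equals the Stirling number of the second kind, i.e. the
number of set partitions of `[n]` into exactly `k` blocks. -/
theorem stmt12 (n k : ℕ) (hn : 1 ≤ n) (hk : 1 ≤ k) :
    {π : Equiv.Perm (Fin n) | AvoidsSP [1, 3, 2] π ∧ desList (permWord π) = k - 1}.ncard =
    {p : Finpartition (Finset.Icc 1 n) | p.parts.card = k}.ncard := by
  rw [← SimsunStirling.image_runMinPartition_permWord hn hk,
    (SimsunStirling.injOn_runMinPartition_permWord.mono fun _ hπ => hπ.1).ncard_image]
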